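/- Let X be a real Banach space, φ a strictly convex increasing function on [0,∞) with φ(0)=0, and r a symmetric random variable with ‖r‖_∞ = 1. Then X is uniformly convex if and only if for every ε > 0, δ_φ(ε) := inf{ E[φ(‖x + r y‖)] − φ(1) : x ∈ S_X, ‖y‖ ≥ ε } > 0. -/

import Mathlib

/-!
For `‖x‖ = 1` the numbers `u = ‖x + z‖`, `v = ‖x - z‖` satisfy `u + v ≥ 2`, and uniform convexity
says `max u v ≥ 1 + η` once `‖z‖` is bounded below. By convexity and monotonicity of `φ` such a pair
has `φ u + φ v ≥ φ (1 - η) + φ (1 + η)`, which exceeds `2 φ(1)` by strict convexity. Since `r` is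
symmetric, `E φ‖x + r y‖` is the average of `φ‖x + r y‖` and `φ‖x - r y‖`, and `|r| > 1/2` has
positive probability because `‖r‖_∞ = 1`; this gives the gap. Conversely, `x + r y` lies on the
segment `[x - y, x + y]` because `|r| ≤ 1`, so `E φ‖x + r y‖ ≤ φ (max ‖x + y‖ ‖x - y‖)`, and the
continuity of `φ` at `1` turns a gap in the expectation into a gap in `max ‖x + y‖ ‖x - y‖`.
-/

open MeasureTheory Set Filter Topology

theorem ConvexOn.map_add_map_le_of_add_eq {s : Set ℝ} {φ : ℝ → ℝ} (hφ : ConvexOn ℝ s φ)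
    {a b c d : ℝ} (hc : c ∈ s) (hd : d ∈ s) (hca : c ≤ a) (had : a ≤ d)
    (hsum : a + b = c + d) : φ a + φ b ≤ φ c + φ d := by
  rcases hca.eq_or_lt with rfl | hca
  · rw [show b = d by linarith]
  have hcd : 0 < d - c := by linarith
  set l := (d - a) / (d - c)
  have hl : l * (d - c) = d - a := div_mul_cancel₀ _ hcd.ne'
  have hl0 : 0 ≤ l := div_nonneg (by linarith) hcd.le
  have hl1 : 0 ≤ 1 - l := by
    rw [sub_nonneg, div_le_one hcd]; linarith
  have ha := hφ.2 hc hd hl0 hl1 (by ring)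
  have hb := hφ.2 hc hd hl1 hl0 (by ring)
  simp only [smul_eq_mul] at ha hb
  rw [show l * c + (1 - l) * d = a by linear_combination -hl] at ha
  rw [show (1 - l) * c + l * d = b by linear_combination hl - hsum] at hb
  linarith

theorem ConvexOn.map_one_sub_add_map_one_add_le {φ : ℝ → ℝ} (hφ : ConvexOn ℝ (Ici 0) φ)
    (hφm : MonotoneOn φ (Ici 0)) {u v η : ℝ} (hu : 0 ≤ u) (hv : 0 ≤ v) (hsum : 2 ≤ u + v)
    (hη0 : 0 ≤ η) (hη1 : η ≤ 1) (hmax : 1 + η ≤ max u v) :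
    φ (1 - η) + φ (1 + η) ≤ φ u + φ v := by
  wlog hvu : v ≤ u generalizing u v
  · rw [add_comm (φ u)]
    exact this hv hu (by linarith) (by rwa [max_comm]) (by linarith)
  rw [max_eq_left hvu] at hmax
  rcases le_total u 2 with hu2 | hu2
  · -- `(1 - η, 1 + η)` is majorized by `(2 - u, u)`, and `2 - u ≤ v`
    have h₁ : φ (1 - η) + φ (1 + η) ≤ φ (2 - u) + φ u :=
      hφ.map_add_map_le_of_add_eq (mem_Ici.2 (by linarith)) hu (by linarith) (by linarith) (by ring)
    linarith [hφm (mem_Ici.2 (by linarith) : 2 - u ∈ Ici 0) hv (by linarith)]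
  · have h₁ : φ (1 - η) + φ (1 + η) ≤ φ 0 + φ 2 :=
      hφ.map_add_map_le_of_add_eq self_mem_Ici (mem_Ici.2 zero_le_two) (by linarith) (by linarith)
        (by ring)
    linarith [hφm self_mem_Ici hv hv, hφm (mem_Ici.2 zero_le_two) hu hu2]

theorem StrictConvexOn.map_lt_average {s : Set ℝ} {φ : ℝ → ℝ} (hφ : StrictConvexOn ℝ s φ)
    {a η : ℝ} (ha : a - η ∈ s) (hb : a + η ∈ s) (hη : η ≠ 0) :
    φ a < (φ (a - η) + φ (a + η)) / 2 := by
  have h := hφ.2 ha hb (by contrapose! hη; linarith) (by norm_num : (0 : ℝ) < 1 / 2)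
    (by norm_num : (0 : ℝ) < 1 / 2) (by norm_num)
  simp only [smul_eq_mul] at h
  rw [show 1 / 2 * (a - η) + 1 / 2 * (a + η) = a by ring] at h
  linarith

theorem MonotoneOn.measurable_comp_of_nonneg {α : Type*} [MeasurableSpace α] {φ : ℝ → ℝ}
    (hφm : MonotoneOn φ (Ici 0)) {g : α → ℝ} (hg : Measurable g) (hg0 : ∀ a, 0 ≤ g a) :
    Measurable fun a => φ (g a) := by
  have hmono : Monotone fun s => φ (max s 0) := fun s t hst =>
    hφm (le_max_right s 0) (le_max_right t 0) (max_le_max hst le_rfl)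
  convert hmono.measurable.comp hg using 2 with a
  simp [max_eq_left (hg0 a)]

section NormedSpace

variable {X : Type*} [NormedAddCommGroup X] [NormedSpace ℝ X]

theorem two_mul_norm_le_norm_add_add_norm_sub (x z : X) : 2 * ‖x‖ ≤ ‖x + z‖ + ‖x - z‖ := by
  calc 2 * ‖x‖ = ‖(x + z) + (x - z)‖ := by
        rw [show (x + z) + (x - z) = (2 : ℝ) • x by module, norm_smul, Real.norm_two]
    _ ≤ ‖x + z‖ + ‖x - z‖ := norm_add_le _ _

theorem norm_add_smul_le_max {t : ℝ} (ht : |t| ≤ 1) (x y : X) :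
    ‖x + t • y‖ ≤ max ‖x + y‖ ‖x - y‖ := by
  obtain ⟨ht₁, ht₂⟩ := abs_le.1 ht
  have hseg : x + t • y ∈ segment ℝ (x + y) (x - y) :=
    ⟨(1 + t) / 2, (1 - t) / 2, by linarith, by linarith, by ring, by module⟩
  exact convexOn_norm convex_univ |>.le_on_segment (mem_univ _) (mem_univ _) hseg

theorem one_le_max_norm_add_norm_sub {x : X} (hx : ‖x‖ = 1) (z : X) :
    1 ≤ max ‖x + z‖ ‖x - z‖ := by
  have hsum := two_mul_norm_le_norm_add_add_norm_sub x z
  rw [hx] at hsum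
  by_contra! h
  rw [max_lt_iff] at h
  linarith

theorem map_one_sub_add_map_one_add_le_of_norm_eq_one {φ : ℝ → ℝ}
    (hφ : ConvexOn ℝ (Ici 0) φ) (hφm : MonotoneOn φ (Ici 0)) {x : X} (hx : ‖x‖ = 1) (z : X)
    {η : ℝ} (hη0 : 0 ≤ η) (hη1 : η ≤ 1) (hmax : 1 + η ≤ max ‖x + z‖ ‖x - z‖) :
    φ (1 - η) + φ (1 + η) ≤ φ ‖x + z‖ + φ ‖x - z‖ := by
  have hsum := two_mul_norm_le_norm_add_add_norm_sub x z
  rw [hx, mul_one] at hsum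
  exact hφ.map_one_sub_add_map_one_add_le hφm (norm_nonneg _) (norm_nonneg _) hsum hη0 hη1 hmax

theorem two_mul_map_one_le_of_norm_eq_one {φ : ℝ → ℝ}
    (hφ : ConvexOn ℝ (Ici 0) φ) (hφm : MonotoneOn φ (Ici 0)) {x : X} (hx : ‖x‖ = 1) (z : X) :
    2 * φ 1 ≤ φ ‖x + z‖ + φ ‖x - z‖ := by
  have h := map_one_sub_add_map_one_add_le_of_norm_eq_one hφ hφm hx z le_rfl zero_le_one
    (by simpa using one_le_max_norm_add_norm_sub hx z)
  rw [sub_zero, add_zero] at h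
  linarith

end NormedSpace

section RandomVariable

variable {Ω : Type*} [MeasurableSpace Ω] {P : Measure Ω} {r : Ω → ℝ}

theorem ae_abs_le_one_of_eLpNorm_top_eq_one (hnorm : eLpNorm r ⊤ P = 1) :
    ∀ᵐ ω ∂P, |r ω| ≤ 1 := by
  have h := ae_le_eLpNormEssSup (f := r) (μ := P)
  rw [← eLpNorm_exponent_top, hnorm] at h
  filter_upwards [h] with ω hω
  rwa [← ofReal_norm, ENNReal.ofReal_le_one, Real.norm_eq_abs] at hω

theorem measure_lt_abs_ne_zero_of_eLpNorm_top_eq_one (hnorm : eLpNorm r ⊤ P = 1) {c : ℝ}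
    (hc : c < 1) : P {ω | c < |r ω|} ≠ 0 := by
  intro h0
  have hae : ∀ᵐ ω ∂P, ‖r ω‖ ≤ c := by
    rw [ae_iff]
    simpa only [Real.norm_eq_abs, not_le] using h0
  have hle := eLpNormEssSup_le_of_ae_bound hae
  rw [← eLpNorm_exponent_top, hnorm, ENNReal.one_le_ofReal] at hle
  linarith

theorem integral_comp_neg_eq_integral_comp (hmeas : Measurable r)
    (hsymm : Measure.map r P = Measure.map (fun ω => -(r ω)) P) {g : ℝ → ℝ} (hg : Measurable g) :
    ∫ ω, g (-r ω) ∂P = ∫ ω, g (r ω) ∂P := by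
  calc ∫ ω, g (-r ω) ∂P = ∫ t, g t ∂(Measure.map (fun ω => -r ω) P) :=
        (integral_map hmeas.neg.aemeasurable hg.aestronglyMeasurable).symm
    _ = ∫ t, g t ∂(Measure.map r P) := by rw [hsymm]
    _ = ∫ ω, g (r ω) ∂P := integral_map hmeas.aemeasurable hg.aestronglyMeasurable

variable {X : Type*} [NormedAddCommGroup X] [NormedSpace ℝ X] {φ : ℝ → ℝ}

theorem measurable_comp_norm_add_smul (hφm : MonotoneOn φ (Ici 0)) (x y : X) :
    Measurable fun t : ℝ => φ ‖x + t • y‖ :=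
  hφm.measurable_comp_of_nonneg (by fun_prop : Continuous fun t : ℝ => ‖x + t • y‖).measurable
    fun _ => norm_nonneg _

theorem integrable_comp_norm_add_smul [IsFiniteMeasure P] (hmeas : Measurable r)
    (hr : ∀ᵐ ω ∂P, |r ω| ≤ 1) (hφm : MonotoneOn φ (Ici 0)) (x y : X) :
    Integrable (fun ω => φ ‖x + r ω • y‖) P := by
  refine .of_bound ((measurable_comp_norm_add_smul hφm x y).comp hmeas).aestronglyMeasurable
    (max |φ 0| |φ (‖x‖ + ‖y‖)|) ?_
  filter_upwards [hr] with ω hω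
  have hle : ‖x + r ω • y‖ ≤ ‖x‖ + ‖y‖ :=
    (norm_add_smul_le_max hω x y).trans (max_le (norm_add_le x y) (norm_sub_le x y))
  exact abs_le_max_abs_abs (hφm self_mem_Ici (norm_nonneg _) (norm_nonneg _))
    (hφm (norm_nonneg _) (by positivity : (0 : ℝ) ≤ ‖x‖ + ‖y‖) hle)

theorem integrable_comp_norm_sub_smul [IsFiniteMeasure P] (hmeas : Measurable r)
    (hr : ∀ᵐ ω ∂P, |r ω| ≤ 1) (hφm : MonotoneOn φ (Ici 0)) (x y : X) :
    Integrable (fun ω => φ ‖x - r ω • y‖) P := by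
  simpa only [sub_eq_add_neg, ← smul_neg] using integrable_comp_norm_add_smul hmeas hr hφm x (-y)

theorem integral_comp_norm_add_smul_le [IsProbabilityMeasure P] (hmeas : Measurable r)
    (hr : ∀ᵐ ω ∂P, |r ω| ≤ 1) (hφm : MonotoneOn φ (Ici 0)) (x y : X) :
    ∫ ω, φ ‖x + r ω • y‖ ∂P ≤ φ (max ‖x + y‖ ‖x - y‖) := by
  have hle : ∀ᵐ ω ∂P, φ ‖x + r ω • y‖ ≤ φ (max ‖x + y‖ ‖x - y‖) := by
    filter_upwards [hr] with ω hω
    exact hφm (norm_nonneg _) ((norm_nonneg _).trans (le_max_left _ _))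
      (norm_add_smul_le_max hω x y)
  simpa using integral_mono_ae (integrable_comp_norm_add_smul hmeas hr hφm x y)
    (integrable_const _) hle

theorem integral_comp_norm_add_smul_eq_average [IsFiniteMeasure P] (hmeas : Measurable r)
    (hsymm : Measure.map r P = Measure.map (fun ω => -(r ω)) P) (hr : ∀ᵐ ω ∂P, |r ω| ≤ 1)
    (hφm : MonotoneOn φ (Ici 0)) (x y : X) :
    ∫ ω, φ ‖x + r ω • y‖ ∂P = ∫ ω, (φ ‖x + r ω • y‖ + φ ‖x - r ω • y‖) / 2 ∂P := by
  have hsub : ∀ ω, x - r ω • y = x + (-r ω) • y := fun ω => by rw [neg_smul, sub_eq_add_neg]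
  rw [integral_div, integral_add (integrable_comp_norm_add_smul hmeas hr hφm x y)
    (integrable_comp_norm_sub_smul hmeas hr hφm x y)]
  simp only [hsub]
  rw [integral_comp_neg_eq_integral_comp hmeas hsymm (measurable_comp_norm_add_smul hφm x y)]
  ring

theorem exists_lt_integral_of_uniformlyConvex [IsProbabilityMeasure P] (hmeas : Measurable r)
    (hsymm : Measure.map r P = Measure.map (fun ω => -(r ω)) P) (hr : ∀ᵐ ω ∂P, |r ω| ≤ 1)
    (hA : P {ω | 1 / 2 < |r ω|} ≠ 0) (hφ : StrictConvexOn ℝ (Ici 0) φ)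
    (hφm : MonotoneOn φ (Ici 0))
    (hUC : ∀ ε : ℝ, 0 < ε → ∃ δ : ℝ, 0 < δ ∧
      ∀ x y : X, ‖x‖ = 1 → ε ≤ ‖y‖ → 1 + δ ≤ max ‖x + y‖ ‖x - y‖) :
    ∀ ε : ℝ, 0 < ε → ∃ δ : ℝ, 0 < δ ∧
      ∀ x y : X, ‖x‖ = 1 → ε ≤ ‖y‖ → φ 1 + δ ≤ ∫ ω, φ ‖x + r ω • y‖ ∂P := by
  intro ε hε
  obtain ⟨δ₀, hδ₀, hmax⟩ := hUC (ε / 2) (by positivity)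
  set η := min δ₀ 1
  have hη0 : 0 < η := lt_min hδ₀ one_pos
  have hη1 : η ≤ 1 := min_le_right _ _
  set gap := (φ (1 - η) + φ (1 + η)) / 2 - φ 1 with hgap_def
  have hgap : 0 < gap := sub_pos.2 <|
    hφ.map_lt_average (mem_Ici.2 (by linarith)) (mem_Ici.2 (by linarith)) hη0.ne'
  set A := {ω | 1 / 2 < |r ω|}
  have hAm : MeasurableSet A := measurableSet_lt measurable_const hmeas.abs
  refine ⟨gap * P.real A, mul_pos hgap (ENNReal.toReal_pos hA (measure_ne_top P A)),
    fun x y hx hy => ?_⟩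
  have hpt : ∀ ω, φ 1 + A.indicator (fun _ => gap) ω ≤
      (φ ‖x + r ω • y‖ + φ ‖x - r ω • y‖) / 2 := by
    intro ω
    by_cases hω : ω ∈ A
    · have hz : ε / 2 ≤ ‖r ω • y‖ := by
        rw [norm_smul, Real.norm_eq_abs]
        nlinarith [show 1 / 2 < |r ω| from hω]
      have h := map_one_sub_add_map_one_add_le_of_norm_eq_one hφ.convexOn hφm hx (r ω • y)
        hη0.le hη1 ((add_le_add_right (min_le_left _ _) 1).trans (hmax x _ hx hz))
      rw [indicator_of_mem hω]
      linarith [hgap_def]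
    · rw [indicator_of_notMem hω]
      linarith [two_mul_map_one_le_of_norm_eq_one hφ.convexOn hφm hx (r ω • y)]
  have hint_avg : Integrable (fun ω => (φ ‖x + r ω • y‖ + φ ‖x - r ω • y‖) / 2) P :=
    ((integrable_comp_norm_add_smul hmeas hr hφm x y).add
      (integrable_comp_norm_sub_smul hmeas hr hφm x y)).div_const 2
  calc φ 1 + gap * P.real A = ∫ ω, φ 1 + A.indicator (fun _ => gap) ω ∂P := by
        rw [integral_add (integrable_const _) ((integrable_const _).indicator hAm),
          integral_const, integral_indicator_const _ hAm]
        simp [mul_comm]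
    _ ≤ ∫ ω, (φ ‖x + r ω • y‖ + φ ‖x - r ω • y‖) / 2 ∂P :=
        integral_mono ((integrable_const _).add ((integrable_const _).indicator hAm)) hint_avg hpt
    _ = ∫ ω, φ ‖x + r ω • y‖ ∂P :=
        (integral_comp_norm_add_smul_eq_average hmeas hsymm hr hφm x y).symm

theorem uniformlyConvex_of_exists_lt_integral [IsProbabilityMeasure P] (hmeas : Measurable r)
    (hr : ∀ᵐ ω ∂P, |r ω| ≤ 1) (hφ : ConvexOn ℝ (Ici 0) φ) (hφm : MonotoneOn φ (Ici 0))
    (h : ∀ ε : ℝ, 0 < ε → ∃ δ : ℝ, 0 < δ ∧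
      ∀ x y : X, ‖x‖ = 1 → ε ≤ ‖y‖ → φ 1 + δ ≤ ∫ ω, φ ‖x + r ω • y‖ ∂P) :
    ∀ ε : ℝ, 0 < ε → ∃ δ : ℝ, 0 < δ ∧
      ∀ x y : X, ‖x‖ = 1 → ε ≤ ‖y‖ → 1 + δ ≤ max ‖x + y‖ ‖x - y‖ := by
  intro ε hε
  obtain ⟨δ, hδ, hgap⟩ := h ε hε
  obtain ⟨s, hφs, hs⟩ : ∃ s, φ s < φ 1 + δ ∧ 1 < s := by
    have hcont : ContinuousAt φ 1 := hφ.continuousOn_interior.continuousAt <| by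
      rw [interior_Ici]; exact Ioi_mem_nhds one_pos
    have hev : ∀ᶠ s in 𝓝[>] 1, φ s < φ 1 + δ :=
      (hcont.eventually (gt_mem_nhds (lt_add_of_pos_right _ hδ))).filter_mono nhdsWithin_le_nhds
    exact (hev.and self_mem_nhdsWithin).exists
  refine ⟨s - 1, sub_pos.2 hs, fun x y hx hy => ?_⟩
  by_contra! hlt
  have hle := integral_comp_norm_add_smul_le hmeas hr hφm x y
  have hφle : φ (max ‖x + y‖ ‖x - y‖) ≤ φ s :=
    hφm ((norm_nonneg _).trans (le_max_left _ _)) (mem_Ici.2 (by linarith)) (by linarith)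
  linarith [hgap x y hx hy]

end RandomVariable

theorem stmt12_general {Ω : Type*} [MeasurableSpace Ω] (P : Measure Ω) [IsProbabilityMeasure P]
    {X : Type*} [NormedAddCommGroup X] [NormedSpace ℝ X]
    (r : Ω → ℝ) (hmeas : Measurable r)
    (hsymm : Measure.map r P = Measure.map (fun ω => -(r ω)) P)
    (hnorm : eLpNorm r ⊤ P = 1)
    (φ : ℝ → ℝ) (hφ : StrictConvexOn ℝ (Set.Ici 0) φ)
    (hφm : MonotoneOn φ (Set.Ici 0)) :
    (∀ ε : ℝ, 0 < ε → ∃ δ : ℝ, 0 < δ ∧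
        ∀ x y : X, ‖x‖ = 1 → ε ≤ ‖y‖ → 1 + δ ≤ max ‖x + y‖ ‖x - y‖) ↔
      (∀ ε : ℝ, 0 < ε → ∃ δ : ℝ, 0 < δ ∧
        ∀ x y : X, ‖x‖ = 1 → ε ≤ ‖y‖ →
          φ 1 + δ ≤ ∫ ω, φ ‖x + r ω • y‖ ∂P) := by
  have hr := ae_abs_le_one_of_eLpNorm_top_eq_one hnorm
  exact ⟨exists_lt_integral_of_uniformlyConvex hmeas hsymm hr
      (measure_lt_abs_ne_zero_of_eLpNorm_top_eq_one hnorm (by norm_num)) hφ hφm,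
    uniformlyConvex_of_exists_lt_integral hmeas hr hφ.convexOn hφm⟩

theorem stmt12 {Ω : Type*} [MeasurableSpace Ω] (P : Measure Ω) [IsProbabilityMeasure P]
    {X : Type*} [NormedAddCommGroup X] [NormedSpace ℝ X]
    (r : Ω → ℝ) (hmeas : Measurable r)
    (hsymm : Measure.map r P = Measure.map (fun ω => -(r ω)) P)
    (hnorm : eLpNorm r ⊤ P = 1)
    (φ : ℝ → ℝ) (hφ : StrictConvexOn ℝ (Set.Ici 0) φ)
    (hφm : MonotoneOn φ (Set.Ici 0)) (hφ0 : φ 0 = 0) :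
    (∀ ε : ℝ, 0 < ε → ∃ δ : ℝ, 0 < δ ∧
        ∀ x y : X, ‖x‖ = 1 → ε ≤ ‖y‖ → 1 + δ ≤ max ‖x + y‖ ‖x - y‖) ↔
      (∀ ε : ℝ, 0 < ε → ∃ δ : ℝ, 0 < δ ∧
        ∀ x y : X, ‖x‖ = 1 → ε ≤ ‖y‖ →
          φ 1 + δ ≤ ∫ ω, φ ‖x + r ω • y‖ ∂P) :=
  stmt12_general P r hmeas hsymm hnorm φ hφ hφm
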